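/- Consider the random-current weights for the finite-volume Ising model on a finite set Λ ⊂ ℤ^d with β ≥ 0 and couplings J ≥ 0, and let o, x ∈ Λ with o ≠ x. Then: (1) ∑_{n : ∂n = {o,x}, n_{o,x} odd} w_Λ(n) = tanh(β J_{o,x}) · ∑_{n : ∂n = ∅, n_{o,x} even} w_Λ(n); and (2) ∑_{n : ∂n = ∅, n_{o,x} odd} w_Λ(n) = tanh(β J_{o,x}) · ∑_{n : ∂n = {o,x}, n_{o,x} even} w_Λ(n). -/
import Mathlib


open scoped BigOperators ENNReal Classical

noncomputable section

namespace LongRange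

abbrev V (d : ℕ) : Type := Fin d → ℤ

variable {d : ℕ}

/-- The edges (unordered pairs of distinct vertices) of the finite volume `Λ`. -/
abbrev CurE (Λ : Finset (V d)) : Type := {b : Sym2 ↥Λ // ¬ b.IsDiag}

/-- The coupling attached to an unordered pair (symmetrized). -/
def Jsym {Λ : Finset (V d)} (J : V d → V d → ℝ) : Sym2 ↥Λ → ℝ :=
  Sym2.lift ⟨fun u v => (J u.1 v.1 + J v.1 u.1) / 2, fun u v => by ring⟩

/-- Extension of a current to all of `Sym2 ↥Λ`, vanishing on the diagonal. -/
def curExt {Λ : Finset (V d)} (N : CurE Λ → ℕ) (b : Sym2 ↥Λ) : ℕ :=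
  if h : b.IsDiag then 0 else N ⟨b, h⟩

/-- The random-current weight `w_Λ(n) = ∏_{{u,v}} (βJ_{u,v})^{n_{u,v}} / n_{u,v}!`. -/
def curWeight {Λ : Finset (V d)} (β : ℝ) (J : V d → V d → ℝ) (N : CurE Λ → ℕ) : ℝ :=
  ∏ b : CurE Λ, (β * Jsym J b.1) ^ (N b) / ((N b).factorial : ℝ)

/-- `∂n = S`: the set of vertices with odd total incident current is exactly `S`. -/
def hasSources {Λ : Finset (V d)} (N : CurE Λ → ℕ) (S : Set ↥Λ) : Prop :=
  ∀ y : ↥Λ, (Odd (∑ z : ↥Λ, curExt N s(y, z)) ↔ y ∈ S)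

variable {Λ : Finset (V d)}

/-- the distinguished edge -/
def e0 (o x : ↥Λ) (h : o ≠ x) : CurE Λ := ⟨s(o, x), by simp [h]⟩

lemma curExt_e0 (o x : ↥Λ) (h : o ≠ x) (N : CurE Λ → ℕ) :
    curExt N s(o, x) = N (e0 o x h) := by
  simp [curExt, e0, Sym2.mk_isDiag_iff, h]

lemma curExt_update_zero (o x : ↥Λ) (h : o ≠ x) (N : CurE Λ → ℕ) (b : Sym2 ↥Λ) :
    curExt N b = curExt (Function.update N (e0 o x h) 0) b
      + (if b = s(o, x) then N (e0 o x h) else 0) := by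
  unfold curExt
  by_cases hb : b.IsDiag
  · have : b ≠ s(o, x) := by
      rintro rfl; exact (by simpa [h] using hb)
    simp [hb, this]
  · by_cases hbe : b = s(o, x)
    · subst hbe
      rw [dif_neg hb, if_pos rfl]
      have hbe' : (⟨s(o, x), hb⟩ : CurE Λ) = e0 o x h := Subtype.ext rfl
      rw [dif_neg hb, hbe', Function.update_self]
      omega
    · have : (⟨b, hb⟩ : CurE Λ) ≠ e0 o x h := by
        intro hc; exact hbe (by simpa [e0] using congrArg Subtype.val hc)
      simp [hb, Function.update_of_ne this, hbe]

lemma deg_update (o x : ↥Λ) (h : o ≠ x) (N : CurE Λ → ℕ) (y : ↥Λ) :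
    ∑ z : ↥Λ, curExt N s(y, z) =
      (∑ z : ↥Λ, curExt (Function.update N (e0 o x h) 0) s(y, z))
        + (if y = o ∨ y = x then N (e0 o x h) else 0) := by
  have key : ∀ z : ↥Λ, curExt N s(y, z) =
      curExt (Function.update N (e0 o x h) 0) s(y, z)
        + (if s(y, z) = s(o, x) then N (e0 o x h) else 0) :=
    fun z => curExt_update_zero o x h N _
  simp_rw [key]
  rw [Finset.sum_add_distrib]
  congr 1
  by_cases hyo : y = o
  · subst hyo
    have hz : ∀ z : ↥Λ, (s(y, z) = s(y, x)) ↔ z = x := by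
      intro z; rw [Sym2.eq_iff]
      constructor
      · rintro (⟨-, rfl⟩ | ⟨ho, rfl⟩)
        · rfl
        · exact absurd ho h
      · rintro rfl; exact Or.inl ⟨rfl, rfl⟩
    simp [hz]
  · by_cases hyx : y = x
    · subst hyx
      have hz : ∀ z : ↥Λ, (s(y, z) = s(o, y)) ↔ z = o := by
        intro z; rw [Sym2.eq_iff]
        constructor
        · rintro (⟨rfl, -⟩ | ⟨-, rfl⟩)
          · exact absurd rfl hyo
          · rfl
        · rintro rfl; exact Or.inr ⟨rfl, rfl⟩
      simp [hz, hyo]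
    · have hz : ∀ z : ↥Λ, ¬(s(y, z) = s(o, x)) := by
        intro z hc; rw [Sym2.eq_iff] at hc
        rcases hc with ⟨rfl, -⟩ | ⟨rfl, -⟩
        · exact hyo rfl
        · exact hyx rfl
      simp [hz, hyo, hyx]

lemma hs_even (o x : ↥Λ) (h : o ≠ x) (N : CurE Λ → ℕ)
    (hk : Even (N (e0 o x h))) (S : Set ↥Λ) :
    hasSources N S ↔ hasSources (Function.update N (e0 o x h) 0) S := by
  unfold hasSources
  refine forall_congr' fun y => ?_
  rw [deg_update o x h N y]
  obtain ⟨c, hc⟩ := hk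
  have hpar : Odd ((∑ z : ↥Λ, curExt (Function.update N (e0 o x h) 0) s(y, z))
      + (if y = o ∨ y = x then N (e0 o x h) else 0)) ↔
      Odd (∑ z : ↥Λ, curExt (Function.update N (e0 o x h) 0) s(y, z)) := by
    split_ifs with hcond <;> rw [Nat.odd_iff, Nat.odd_iff] <;> omega
  rw [hpar]

lemma hs_odd_pair (o x : ↥Λ) (h : o ≠ x) (N : CurE Λ → ℕ)
    (hk : Odd (N (e0 o x h))) :
    hasSources N {o, x} ↔ hasSources (Function.update N (e0 o x h) 0) ∅ := by
  unfold hasSources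
  refine forall_congr' fun y => ?_
  rw [deg_update o x h N y]
  obtain ⟨c, hc⟩ := hk
  by_cases hcond : y = o ∨ y = x
  · have hmem : y ∈ ({o, x} : Set ↥Λ) := by
      rcases hcond with rfl | rfl
      · exact Set.mem_insert _ _
      · exact Set.mem_insert_of_mem _ rfl
    simp only [if_pos hcond, hmem, iff_true, Set.mem_empty_iff_false, iff_false]
    rw [Nat.odd_iff, Nat.odd_iff]
    omega
  · have hmem : y ∉ ({o, x} : Set ↥Λ) := by
      simpa using hcond
    simp [if_neg hcond, hmem]

lemma hs_odd_empty (o x : ↥Λ) (h : o ≠ x) (N : CurE Λ → ℕ)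
    (hk : Odd (N (e0 o x h))) :
    hasSources N ∅ ↔ hasSources (Function.update N (e0 o x h) 0) {o, x} := by
  unfold hasSources
  refine forall_congr' fun y => ?_
  rw [deg_update o x h N y]
  obtain ⟨c, hc⟩ := hk
  by_cases hcond : y = o ∨ y = x
  · have hmem : y ∈ ({o, x} : Set ↥Λ) := by
      rcases hcond with rfl | rfl
      · exact Set.mem_insert _ _
      · exact Set.mem_insert_of_mem _ rfl
    simp only [if_pos hcond, hmem, iff_true, Set.mem_empty_iff_false, iff_false]
    rw [Nat.odd_iff, Nat.odd_iff]
    omega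
  · have hmem : y ∉ ({o, x} : Set ↥Λ) := by
      simpa using hcond
    simp [if_neg hcond, hmem]

lemma Jsym_nonneg {J : V d → V d → ℝ} (hJ : ∀ u v, 0 ≤ J u v) (b : Sym2 ↥Λ) :
    0 ≤ Jsym J b := by
  induction b using Sym2.ind with
  | _ u v =>
    have h1 := hJ u.1 v.1
    have h2 := hJ v.1 u.1
    simp only [Jsym, Sym2.lift_mk]
    linarith

lemma curWeight_nonneg {β : ℝ} (hβ : 0 ≤ β) {J : V d → V d → ℝ}
    (hJ : ∀ u v, 0 ≤ J u v) (N : CurE Λ → ℕ) : 0 ≤ curWeight β J N :=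
  Finset.prod_nonneg fun b _ =>
    div_nonneg (pow_nonneg (mul_nonneg hβ (Jsym_nonneg hJ b.1)) _) (Nat.cast_nonneg _)

lemma curWeight_update (o x : ↥Λ) (h : o ≠ x) (β : ℝ) (J : V d → V d → ℝ)
    (N : CurE Λ → ℕ) :
    curWeight β J N =
      ((β * Jsym J s(o, x)) ^ (N (e0 o x h)) / ((N (e0 o x h)).factorial : ℝ)) *
        curWeight β J (Function.update N (e0 o x h) 0) := by
  classical
  unfold curWeight
  set G : CurE Λ → ℝ := fun b => (β * Jsym J b.1) ^ (N b) / ((N b).factorial : ℝ) with hG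
  have h1 : ∀ b : CurE Λ,
      (β * Jsym J b.1) ^ (Function.update N (e0 o x h) 0 b) /
        ((Function.update N (e0 o x h) 0 b).factorial : ℝ)
      = Function.update G (e0 o x h) 1 b := by
    intro b
    by_cases hb : b = e0 o x h
    · subst hb; simp [hG]
    · simp [Function.update_of_ne hb, hG]
  rw [Finset.prod_congr rfl (fun b _ => h1 b),
      Finset.prod_update_of_mem (Finset.mem_univ _), one_mul,
      ← Finset.mul_prod_erase Finset.univ G (Finset.mem_univ (e0 o x h))]
  rw [Finset.sdiff_singleton_eq_erase]
  rfl

lemma update_update_zero {o x : ↥Λ} {h : o ≠ x} (M : CurE Λ → ℕ)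
    (hM : M (e0 o x h) = 0) (k : ℕ) :
    Function.update (Function.update M (e0 o x h) k) (e0 o x h) 0 = M := by
  rw [Function.update_idem, ← hM, Function.update_eq_self]

lemma tsum_factor (o x : ↥Λ) (h : o ≠ x) {β : ℝ} (hβ : 0 ≤ β) {J : V d → V d → ℝ}
    (hJ : ∀ u v, 0 ≤ J u v) (P : ℕ → Prop) (S S' : Set ↥Λ)
    (hP : ∀ N : CurE Λ → ℕ, P (N (e0 o x h)) →
      (hasSources N S ↔ hasSources (Function.update N (e0 o x h) 0) S')) :
    (∑' N : {N : CurE Λ → ℕ // hasSources N S ∧ P (curExt N s(o, x))},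
        ENNReal.ofReal (curWeight β J N.1)) =
      (∑' k : {k : ℕ // P k},
          ENNReal.ofReal ((β * Jsym J s(o, x)) ^ k.1 / (k.1.factorial : ℝ))) *
        (∑' M : {M : CurE Λ → ℕ // M (e0 o x h) = 0 ∧ hasSources M S'},
          ENNReal.ofReal (curWeight β J M.1)) := by
  classical
  have hg : ∀ k : ℕ, 0 ≤ (β * Jsym J s(o, x)) ^ k / (k.factorial : ℝ) := fun k =>
    div_nonneg (pow_nonneg (mul_nonneg hβ (Jsym_nonneg hJ _)) _) (Nat.cast_nonneg _)
  let E : {k : ℕ // P k} × {M : CurE Λ → ℕ // M (e0 o x h) = 0 ∧ hasSources M S'} ≃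
      {N : CurE Λ → ℕ // hasSources N S ∧ P (curExt N s(o, x))} :=
    { toFun := fun p => ⟨Function.update p.2.1 (e0 o x h) p.1.1, by
        have hNe : (Function.update p.2.1 (e0 o x h) p.1.1) (e0 o x h) = p.1.1 :=
          Function.update_self _ _ _
        have hPk : P ((Function.update p.2.1 (e0 o x h) p.1.1) (e0 o x h)) := by
          rw [hNe]; exact p.1.2
        refine ⟨?_, by rwa [curExt_e0 o x h]⟩
        rw [hP _ hPk, update_update_zero p.2.1 p.2.2.1]
        exact p.2.2.2⟩
      invFun := fun N => ⟨⟨N.1 (e0 o x h), by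
          have := N.2.2; rwa [curExt_e0 o x h] at this⟩,
        ⟨Function.update N.1 (e0 o x h) 0, by
          refine ⟨Function.update_self _ _ _, ?_⟩
          have := N.2.2; rw [curExt_e0 o x h] at this
          exact (hP N.1 this).mp N.2.1⟩⟩
      left_inv := fun p => by
        ext
        · simp
        · exact congrFun (update_update_zero p.2.1 p.2.2.1 p.1.1) _
      right_inv := fun N => by
        apply Subtype.ext
        simp [Function.update_idem, Function.update_eq_self] }
  rw [← Equiv.tsum_eq E (fun N => ENNReal.ofReal (curWeight β J N.1))]
  have hpt : ∀ p : {k : ℕ // P k} × {M : CurE Λ → ℕ // M (e0 o x h) = 0 ∧ hasSources M S'},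
      ENNReal.ofReal (curWeight β J (E p).1) =
        ENNReal.ofReal ((β * Jsym J s(o, x)) ^ p.1.1 / (p.1.1.factorial : ℝ)) *
          ENNReal.ofReal (curWeight β J p.2.1) := by
    intro p
    have h1 : curWeight β J (Function.update p.2.1 (e0 o x h) p.1.1) =
        ((β * Jsym J s(o, x)) ^ p.1.1 / (p.1.1.factorial : ℝ)) * curWeight β J p.2.1 := by
      rw [curWeight_update o x h β J (Function.update p.2.1 (e0 o x h) p.1.1),
        Function.update_self, update_update_zero p.2.1 p.2.2.1]
    show ENNReal.ofReal (curWeight β J (Function.update p.2.1 (e0 o x h) p.1.1)) = _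
    rw [h1, ENNReal.ofReal_mul (hg _)]
  calc (∑' p, ENNReal.ofReal (curWeight β J (E p).1))
      = ∑' p : {k : ℕ // P k} × {M : CurE Λ → ℕ // M (e0 o x h) = 0 ∧ hasSources M S'},
          ENNReal.ofReal ((β * Jsym J s(o, x)) ^ p.1.1 / (p.1.1.factorial : ℝ)) *
            ENNReal.ofReal (curWeight β J p.2.1) := by
        exact tsum_congr hpt
    _ = _ := by
        rw [ENNReal.tsum_prod']
        simp_rw [ENNReal.tsum_mul_left, ENNReal.tsum_mul_right]

def evenEquiv : ℕ ≃ {k : ℕ // Even k} where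
  toFun m := ⟨2 * m, even_two_mul m⟩
  invFun k := k.1 / 2
  left_inv m := by show 2 * m / 2 = m; omega
  right_inv k := by
    obtain ⟨c, hc⟩ := k.2
    apply Subtype.ext
    show 2 * (k.1 / 2) = k.1; omega

def oddEquiv : ℕ ≃ {k : ℕ // Odd k} where
  toFun m := ⟨2 * m + 1, ⟨m, by ring⟩⟩
  invFun k := k.1 / 2
  left_inv m := by show (2 * m + 1) / 2 = m; omega
  right_inv k := by
    obtain ⟨c, hc⟩ := k.2
    apply Subtype.ext
    show 2 * (k.1 / 2) + 1 = k.1; omega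

lemma tsum_even_eq_cosh {a : ℝ} (ha : 0 ≤ a) :
    (∑' k : {k : ℕ // Even k}, ENNReal.ofReal (a ^ k.1 / (k.1.factorial : ℝ))) =
      ENNReal.ofReal (Real.cosh a) := by
  rw [← Equiv.tsum_eq evenEquiv
    (fun k => ENNReal.ofReal (a ^ k.1 / (k.1.factorial : ℝ)))]
  have : ∀ m : ℕ, 0 ≤ a ^ (2 * m) / ((2 * m).factorial : ℝ) := fun m =>
    div_nonneg (pow_nonneg ha _) (Nat.cast_nonneg _)
  rw [show (fun m : ℕ => ENNReal.ofReal (a ^ (evenEquiv m).1 / ((evenEquiv m).1.factorial : ℝ)))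
      = fun m : ℕ => ENNReal.ofReal (a ^ (2 * m) / ((2 * m).factorial : ℝ)) from rfl]
  rw [← ENNReal.ofReal_tsum_of_nonneg this (Real.hasSum_cosh a).summable,
    ← Real.cosh_eq_tsum]

lemma tsum_odd_eq_sinh {a : ℝ} (ha : 0 ≤ a) :
    (∑' k : {k : ℕ // Odd k}, ENNReal.ofReal (a ^ k.1 / (k.1.factorial : ℝ))) =
      ENNReal.ofReal (Real.sinh a) := by
  rw [← Equiv.tsum_eq oddEquiv
    (fun k => ENNReal.ofReal (a ^ k.1 / (k.1.factorial : ℝ)))]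
  have : ∀ m : ℕ, 0 ≤ a ^ (2 * m + 1) / ((2 * m + 1).factorial : ℝ) := fun m =>
    div_nonneg (pow_nonneg ha _) (Nat.cast_nonneg _)
  rw [show (fun m : ℕ => ENNReal.ofReal (a ^ (oddEquiv m).1 / ((oddEquiv m).1.factorial : ℝ)))
      = fun m : ℕ => ENNReal.ofReal (a ^ (2 * m + 1) / ((2 * m + 1).factorial : ℝ)) from rfl]
  rw [← ENNReal.ofReal_tsum_of_nonneg this (Real.hasSum_sinh a).summable,
    ← Real.sinh_eq_tsum]

/-- switching the parity of `n_{o,x}` in random-current sums. -/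
theorem statement12 (d : ℕ) (hd : 1 ≤ d) (Λ : Finset (V d))
    (β : ℝ) (hβ : 0 ≤ β) (J : V d → V d → ℝ)
    (hJ : ∀ u v, 0 ≤ J u v) (hJs : ∀ u v, J u v = J v u)
    (h0 : (0 : V d) ∈ Λ) (x : V d) (hx : x ∈ Λ) (hox : x ≠ 0) :
    (∑' N : {N : CurE Λ → ℕ // hasSources N {⟨0, h0⟩, ⟨x, hx⟩} ∧
          Odd (curExt N s((⟨0, h0⟩ : ↥Λ), (⟨x, hx⟩ : ↥Λ)))},
        ENNReal.ofReal (curWeight β J N.1)) =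
      ENNReal.ofReal (Real.tanh (β * J 0 x)) *
        (∑' N : {N : CurE Λ → ℕ // hasSources N ∅ ∧
            Even (curExt N s((⟨0, h0⟩ : ↥Λ), (⟨x, hx⟩ : ↥Λ)))},
          ENNReal.ofReal (curWeight β J N.1)) ∧
    (∑' N : {N : CurE Λ → ℕ // hasSources N ∅ ∧
          Odd (curExt N s((⟨0, h0⟩ : ↥Λ), (⟨x, hx⟩ : ↥Λ)))},
        ENNReal.ofReal (curWeight β J N.1)) =
      ENNReal.ofReal (Real.tanh (β * J 0 x)) *
        (∑' N : {N : CurE Λ → ℕ // hasSources N {⟨0, h0⟩, ⟨x, hx⟩} ∧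
            Even (curExt N s((⟨0, h0⟩ : ↥Λ), (⟨x, hx⟩ : ↥Λ)))},
          ENNReal.ofReal (curWeight β J N.1)) := by
  have hne : (⟨0, h0⟩ : ↥Λ) ≠ ⟨x, hx⟩ := fun hc => hox (congrArg Subtype.val hc).symm
  have ha : β * Jsym J s((⟨0, h0⟩ : ↥Λ), (⟨x, hx⟩ : ↥Λ)) = β * J 0 x := by
    simp only [Jsym, Sym2.lift_mk]
    rw [hJs x 0]; ring
  have hann : 0 ≤ β * J 0 x := mul_nonneg hβ (hJ 0 x)
  have htanh : 0 ≤ Real.tanh (β * J 0 x) := by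
    rw [Real.tanh_eq_sinh_div_cosh]
    exact div_nonneg (Real.sinh_nonneg_iff.mpr hann) (Real.cosh_pos _).le
  have hsc : ENNReal.ofReal (Real.sinh (β * J 0 x)) =
      ENNReal.ofReal (Real.tanh (β * J 0 x)) * ENNReal.ofReal (Real.cosh (β * J 0 x)) := by
    rw [← ENNReal.ofReal_mul htanh, Real.tanh_eq_sinh_div_cosh,
      div_mul_cancel₀ _ (Real.cosh_pos _).ne']
  constructor
  · rw [tsum_factor ⟨0, h0⟩ ⟨x, hx⟩ hne hβ hJ Odd {⟨0, h0⟩, ⟨x, hx⟩} ∅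
        (fun N hk => hs_odd_pair _ _ hne N hk),
      tsum_factor ⟨0, h0⟩ ⟨x, hx⟩ hne hβ hJ Even ∅ ∅
        (fun N hk => hs_even _ _ hne N hk ∅),
      ha, tsum_odd_eq_sinh hann, tsum_even_eq_cosh hann, hsc, mul_assoc]
  · rw [tsum_factor ⟨0, h0⟩ ⟨x, hx⟩ hne hβ hJ Odd ∅ {⟨0, h0⟩, ⟨x, hx⟩}
        (fun N hk => hs_odd_empty _ _ hne N hk),
      tsum_factor ⟨0, h0⟩ ⟨x, hx⟩ hne hβ hJ Even {⟨0, h0⟩, ⟨x, hx⟩} {⟨0, h0⟩, ⟨x, hx⟩}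
        (fun N hk => hs_even _ _ hne N hk _),
      ha, tsum_odd_eq_sinh hann, tsum_even_eq_cosh hann, hsc, mul_assoc]


end LongRange
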